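/- For every λ⊕-term M, eBT(M) ≤ eBT(L(M)): the elementary Böhm tree of M is below that of its hereditary head reduct in the approximation order. -/
import Mathlib


set_option maxHeartbeats 1000000

/-! ### The nondeterministic λ⊕-calculus (de Bruijn indices) -/

/-- λ⊕-terms: `M ::= x | λx.M | M N | M ⊕ N`. -/
inductive Lam : Type
  | var : ℕ → Lam
  | lam : Lam → Lam
  | app : Lam → Lam → Lam
  | oplus : Lam → Lam → Lam
deriving Inhabited

namespace Lam

/-- Shift free de Bruijn indices `≥ c` up by one. -/
def shift (c : ℕ) : Lam → Lam
  | .var n => .var (if n < c then n else n + 1)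
  | .lam M => .lam (M.shift (c + 1))
  | .app M N => .app (M.shift c) (N.shift c)
  | .oplus M N => .oplus (M.shift c) (N.shift c)

/-- Capture-avoiding substitution `M[N/x]` (de Bruijn). -/
def subst : Lam → ℕ → Lam → Lam
  | .var n, x, N => if n = x then N else if x < n then .var (n - 1) else .var n
  | .lam M, x, N => .lam (M.subst (x + 1) (N.shift 0))
  | .app M P, x, N => .app (M.subst x N) (P.subst x N)
  | .oplus M P, x, N => .oplus (M.subst x N) (P.subst x N)

/-- Does the head of the application spine consist of a variable? -/
def headVar : Lam → Bool
  | .var _ => true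
  | .app M _ => M.headVar
  | _ => false

/-- The hereditary head reduction strategy `L` on λ⊕-terms. -/
def headL : Lam → Lam
  | .var x => .var x
  | .oplus M N => .oplus M.headL N.headL
  | .lam (.oplus P Q) => .oplus (.lam P) (.lam Q)
  | .lam M => .lam M.headL
  | .app (.lam P) N => P.subst 0 N
  | .app (.oplus P Q) N => .oplus (.app P N) (.app Q N)
  | .app M N => if M.headVar then .app M.headL N.headL else .app M.headL N

end Lam

/-! ### Term approximants and Böhm trees -/

/-- Term approximants: λ⊕-terms extended with `⊥`. -/
inductive LamB : Type
  | bot : LamB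
  | var : ℕ → LamB
  | lam : LamB → LamB
  | app : LamB → LamB → LamB
  | oplus : LamB → LamB → LamB
deriving Inhabited

/-- The approximation order on term approximants: the least partial order
compatible with the syntactic constructs such that `⊥ ≤ M`. -/
inductive LamB.le : LamB → LamB → Prop
  | bot (M : LamB) : LamB.le .bot M
  | refl (M : LamB) : LamB.le M M
  | trans {M N P} : LamB.le M N → LamB.le N P → LamB.le M P
  | lam {M M'} : LamB.le M M' → LamB.le (.lam M) (.lam M')
  | app {M M' N N'} : LamB.le M M' → LamB.le N N' → LamB.le (.app M N) (.app M' N')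
  | oplus {M M' N N'} : LamB.le M M' → LamB.le N N' → LamB.le (.oplus M N) (.oplus M' N')

/-- Is the term of the form `λx⃗.x Q₁…Qₖ`? -/
def Lam.isHNF : Lam → Bool
  | .lam M => M.isHNF
  | .var _ => true
  | .app M _ => M.headVar
  | .oplus _ _ => false

/-- The elementary Böhm tree of a λ⊕-term: `eBT(M⊕N) = eBT(M)⊕eBT(N)`,
`eBT(λx⃗.x Q₁…Qₖ) = λx⃗.x eBT(Q₁)…eBT(Qₖ)`, and `eBT(M) = ⊥` otherwise. -/
def eBT : Lam → LamB
  | .oplus M N => .oplus (eBT M) (eBT N)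
  | .lam M => if M.isHNF then .lam (eBT M) else .bot
  | .var x => .var x
  | .app M N => if M.headVar then .app (eBT M) (eBT N) else .bot

/-- The Böhm tree of a λ⊕-term: the downwards closure of the increasing
sequence of the elementary Böhm trees of its hereditary head reducts. -/
def BTset (M : Lam) : Set LamB := {B | ∃ n : ℕ, LamB.le B (eBT (Lam.headL^[n] M))}


/-! ### STATEMENT 6:
For every λ⊕-term `M`, `eBT(M) ≤ eBT(L(M))`: the elementary Böhm tree of `M` is
below that of its hereditary head reduct in the approximation order. -/

lemma headVar_headL : ∀ M : Lam, M.headVar = true → M.headL.headVar = true := by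
  intro M
  induction M with
  | var x => intro _; rfl
  | lam M ih => intro h; simp [Lam.headVar] at h
  | oplus M N ihM ihN => intro h; simp [Lam.headVar] at h
  | app M N ihM ihN =>
    intro h
    simp only [Lam.headVar] at h
    cases M with
    | var x => simp [Lam.headL, Lam.headVar]
    | lam P => simp [Lam.headVar] at h
    | oplus P Q => simp [Lam.headVar] at h
    | app P Q =>
      simp only [Lam.headL, Lam.headVar, h, if_true] at *
      exact ihM h

lemma isHNF_headL : ∀ M : Lam, M.isHNF = true → M.headL.isHNF = true := by
  intro M
  induction M with
  | var x => intro _; rfl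
  | oplus M N ihM ihN => intro h; simp [Lam.isHNF] at h
  | lam M ih =>
    intro h
    simp only [Lam.isHNF] at h
    cases M with
    | oplus P Q => simp [Lam.isHNF] at h
    | var x => simp [Lam.headL, Lam.isHNF]
    | lam P =>
      simp only [Lam.headL, Lam.isHNF]
      exact ih h
    | app P Q =>
      simp only [Lam.headL, Lam.isHNF] at *
      exact ih h
  | app M N ihM ihN =>
    intro h
    simp only [Lam.isHNF] at h
    cases M with
    | lam P => simp [Lam.headVar] at h
    | oplus P Q => simp [Lam.headVar] at h
    | var x => simp [Lam.headL, Lam.isHNF, Lam.headVar]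
    | app P Q =>
      simp only [Lam.headL, h, if_true, Lam.isHNF]
      exact headVar_headL _ h

theorem eBT_le_eBT_headL (M : Lam) : LamB.le (eBT M) (eBT M.headL) := by
  induction M with
  | var x => exact .refl _
  | oplus M N ihM ihN => exact .oplus ihM ihN
  | lam M ih =>
    by_cases h : M.isHNF = true
    · cases M with
      | oplus P Q => simp [Lam.isHNF] at h
      | var x => exact .refl _
      | lam P =>
        have h2 := isHNF_headL _ h
        simp only [Lam.headL, eBT, h, h2, if_true]
        exact .lam ih
      | app P Q =>
        have h2 := isHNF_headL _ h
        simp only [Lam.headL, eBT, h, h2, if_true]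
        exact .lam ih
    · simp only [eBT, h, if_false]
      exact .bot _
  | app M N ihM ihN =>
    by_cases h : M.headVar = true
    · have h2 := headVar_headL M h
      cases M with
      | lam P => simp [Lam.headVar] at h
      | oplus P Q => simp [Lam.headVar] at h
      | var x =>
        simp only [Lam.headL, eBT, h, if_true, Lam.headVar]
        exact .app ihM ihN
      | app P Q =>
        simp only [Lam.headL, h, if_true, eBT, h2]
        exact .app ihM ihN
    · simp only [eBT, h, if_false]
      exact .bot _
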